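/- arXiv:1801.05999 — 3 statements merged into one kernel-verified Lean document; each statement's English description precedes it below -/
import Mathlib

section
/- Let f be a tempered distribution on ℝ^d, x₀ ∈ ℝ^d and ξ₀ ∈ ℝ^d \ {0}. Suppose there exist a compact neighbourhood K₁ of x₀ and a cone neighbourhood Γ of ξ₀ such that for every n ∈ ℕ and every compactly supported smooth χ : ℝ^d → ℂ with support in K₁ there is C_{n,χ} > 0 with |F(χf)(ξ)| ≤ C_{n,χ}(1+|ξ|)^{-n} for all ξ ∈ Γ. Then there exists a compact neighbourhood K of x₀ (one may take K with K + (K − {x₀}) ⊆ K₁, e.g. a closed ball of half the radius) such that for each n ∈ ℕ there exist C_n > 0 and k_n ∈ ℕ with |V_χ f(x,ξ)| ≤ C_n · sup_{|α| ≤ k_n} ‖D^α χ‖_{L^∞(ℝ^d)} · (1+|ξ|)^{-n} for all x ∈ K, all ξ ∈ Γ, and all compactly supported smooth χ with support contained in K − {x₀} := {y ∈ ℝ^d : y + x₀ ∈ K}. (Theorem 1.1, (ii) ⇒ (iii).) -/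
/-!
Fix a cutoff `ψ` that equals `1` near `x₀` and is supported in `K₁`. Applied to `χ = ψ g`, the
hypothesis says that for every Schwartz function `g` the functionals
`g ↦ (1 + |ξ|)^n ⟨f, e^{-i⟨ξ,·⟩} ψ g⟩`, `ξ ∈ Γ`, are pointwise bounded. The Schwartz space is a
Fréchet space, so by Banach–Steinhaus they are bounded by a single finite sup of Schwartz
seminorms, uniformly in `ξ`. For `x ∈ K` and `χ` supported in `K - x₀` the window
`conj (χ (· - x))` lives where `ψ = 1`, so `V_χ f (x, ξ)` is one of these functionals applied to
the window; as the window stays in a fixed ball, its Schwartz seminorms are bounded by sup norms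
of derivatives of `χ`.
-/

set_option maxHeartbeats 1000000

open MeasureTheory Complex
open scoped ContDiff InnerProductSpace ENNReal RealInnerProductSpace

variable {d : ℕ}

/-- A compactly supported smooth function is a Schwartz function. -/
noncomputable def toSchwartz (g : EuclideanSpace ℝ (Fin d) → ℂ)
    (hg : ContDiff ℝ ∞ g) (hgc : HasCompactSupport g) :
    SchwartzMap (EuclideanSpace ℝ (Fin d)) ℂ where
  toFun := g
  smooth' := hg
  decay' := by
    intro k n
    have h1 : HasCompactSupport fun x : EuclideanSpace ℝ (Fin d) =>
        ‖x‖ ^ k • iteratedFDeriv ℝ n g x := by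
      apply (hgc.iteratedFDeriv (𝕜 := ℝ) n).mono
      intro x hx
      simp only [Function.mem_support] at hx ⊢
      intro h
      exact hx (by rw [h, smul_zero])
    obtain ⟨C, hC⟩ := h1.exists_bound_of_continuous
      ((continuous_norm.pow k).smul (hg.continuous_iteratedFDeriv (mod_cast le_top)))
    refine ⟨C, fun x => ?_⟩
    have := hC x
    rwa [norm_smul, norm_pow, norm_norm] at this

/-- The Fourier transform of `χ f` at `ξ`, i.e. `⟨f, t ↦ e^{-i⟨ξ,t⟩} χ(t)⟩`. -/
noncomputable def FT (f : SchwartzMap (EuclideanSpace ℝ (Fin d)) ℂ →L[ℂ] ℂ)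
    (χ : EuclideanSpace ℝ (Fin d) → ℂ) (hχ : ContDiff ℝ ∞ χ) (hχc : HasCompactSupport χ)
    (ξ : EuclideanSpace ℝ (Fin d)) : ℂ :=
  f (toSchwartz (fun t => Complex.exp (-(⟪ξ, t⟫ : ℝ) * Complex.I) * χ t)
      (((((Complex.ofRealCLM.contDiff.comp (innerSL ℝ ξ).contDiff).neg.mul
        contDiff_const).cexp)).mul hχ)
      hχc.mul_left)

/-- The short-time Fourier transform `V_χ f (x, ξ) = ⟨f, t ↦ e^{-i⟨ξ,t⟩} conj (χ (t - x))⟩`. -/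
noncomputable def STFT (f : SchwartzMap (EuclideanSpace ℝ (Fin d)) ℂ →L[ℂ] ℂ)
    (χ : EuclideanSpace ℝ (Fin d) → ℂ) (hχ : ContDiff ℝ ∞ χ) (hχc : HasCompactSupport χ)
    (x ξ : EuclideanSpace ℝ (Fin d)) : ℂ :=
  FT f (fun t => (starRingEnd ℂ) (χ (t - x)))
    ((Complex.conjCLE.contDiff).comp (hχ.comp (contDiff_id.sub contDiff_const)))
    ((hχc.comp_left (g := starRingEnd ℂ) (map_zero _)).comp_isClosedEmbedding
      (Homeomorph.subRight x).isClosedEmbedding)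
    ξ

/-- A cone neighbourhood of `ξ₀`. -/
def IsConeNbhd (Γ : Set (EuclideanSpace ℝ (Fin d))) (ξ₀ : EuclideanSpace ℝ (Fin d)) : Prop :=
  IsOpen Γ ∧ ξ₀ ∈ Γ ∧ (0 : EuclideanSpace ℝ (Fin d)) ∉ Γ ∧
    ∀ ξ ∈ Γ, ∀ t : ℝ, 0 < t → t • ξ ∈ Γ

/-- A cone in `ℝ^d \ {0}`. -/
def IsCone (Γ : Set (EuclideanSpace ℝ (Fin d))) : Prop :=
  (0 : EuclideanSpace ℝ (Fin d)) ∉ Γ ∧ ∀ ξ ∈ Γ, ∀ t : ℝ, 0 < t → t • ξ ∈ Γ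

/-- `sup_{|α| ≤ k} ‖D^α χ‖_{L^∞(ℝ^d)}`, formalised via iterated Fréchet derivatives. -/
noncomputable def supNorm (k : ℕ) (χ : EuclideanSpace ℝ (Fin d) → ℂ) : ℝ :=
  (Finset.range (k + 1)).sup' (by simp) fun i => ⨆ x, ‖iteratedFDeriv ℝ i χ x‖

/-- `sup_{|α| ≤ k} ‖D^α χ‖_{L^∞(K)}`. -/
noncomputable def supNormOn (K : Set (EuclideanSpace ℝ (Fin d))) (k : ℕ)
    (χ : EuclideanSpace ℝ (Fin d) → ℂ) : ℝ :=
  (Finset.range (k + 1)).sup' (by simp) fun i => ⨆ x : K, ‖iteratedFDeriv ℝ i χ (x : EuclideanSpace ℝ (Fin d))‖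

/-- `∫_Γ ⟨ξ⟩^{2s} |g(ξ)|² dξ`, where `⟨ξ⟩^{2s} = (1+|ξ|²)^s`. -/
noncomputable def sqIntCone (s : ℝ) (Γ : Set (EuclideanSpace ℝ (Fin d)))
    (g : EuclideanSpace ℝ (Fin d) → ℂ) : ℝ≥0∞ :=
  ∫⁻ ξ in Γ, ENNReal.ofReal ((1 + ‖ξ‖ ^ 2) ^ s) * (‖g ξ‖₊ : ℝ≥0∞) ^ 2

/-- `‖⟨·⟩^s g‖_{L²(Γ)}`. -/
noncomputable def l2Cone (s : ℝ) (Γ : Set (EuclideanSpace ℝ (Fin d)))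
    (g : EuclideanSpace ℝ (Fin d) → ℂ) : ℝ≥0∞ :=
  sqIntCone s Γ g ^ (1 / 2 : ℝ)

open Filter Function Topology Set Metric
open scoped SchwartzMap

namespace SchwartzMap

variable {E F : Type*} [NormedAddCommGroup E] [NormedSpace ℝ E]
  [NormedAddCommGroup F] [NormedSpace ℝ F]

instance : (uniformity 𝓢(E, F)).IsCountablyGenerated :=
  IsUniformAddGroup.uniformity_countably_generated

theorem iteratedFDeriv_sub (f g : 𝓢(E, F)) (n : ℕ) (x : E) :
    iteratedFDeriv ℝ n ⇑(f - g) x = iteratedFDeriv ℝ n f x - iteratedFDeriv ℝ n g x :=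
  iteratedFDeriv_sub_apply (f.smooth n).contDiffAt (g.smooth n).contDiffAt

theorem exists_seminorm_sub_lt_of_cauchySeq {u : ℕ → 𝓢(E, F)} (hu : CauchySeq u)
    (k n : ℕ) {ε : ℝ} (hε : 0 < ε) :
    ∃ N, ∀ j ≥ N, ∀ l ≥ N, SchwartzMap.seminorm ℝ k n (u j - u l) < ε := by
  have hsub := ((IsUniformAddGroup.cauchy_map_iff_tendsto atTop u).mp hu).2
  have hp := ((schwartz_withSeminorms ℝ E F).continuous_seminorm (k, n)).tendsto 0
  rw [map_zero] at hp
  have hlt := (hp.comp hsub).eventually (gt_mem_nhds hε)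
  rw [prod_atTop_atTop_eq] at hlt
  exact eventually_atTop_prod_self'.mp hlt

section Complete

variable [CompleteSpace F] {u : ℕ → 𝓢(E, F)}

noncomputable def limIteratedFDeriv (u : ℕ → 𝓢(E, F)) (n : ℕ) (x : E) :
    ContinuousMultilinearMap ℝ (fun _ : Fin n => E) F :=
  limUnder atTop fun j => iteratedFDeriv ℝ n (u j) x

theorem tendsto_limIteratedFDeriv (hu : CauchySeq u) (n : ℕ) (x : E) :
    Tendsto (fun j => iteratedFDeriv ℝ n (u j) x) atTop (𝓝 (limIteratedFDeriv u n x)) := by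
  refine CauchySeq.tendsto_limUnder (Metric.cauchySeq_iff.mpr fun ε hε => ?_)
  obtain ⟨N, hN⟩ := exists_seminorm_sub_lt_of_cauchySeq hu 0 n hε
  refine ⟨N, fun j hj l hl => ?_⟩
  rw [dist_eq_norm, ← iteratedFDeriv_sub]
  exact (norm_iteratedFDeriv_le_seminorm ℝ _ n x).trans_lt (hN j hj l hl)

theorem exists_norm_pow_mul_norm_sub_limIteratedFDeriv_le (hu : CauchySeq u) (k n : ℕ)
    {ε : ℝ} (hε : 0 < ε) :
    ∃ N, ∀ j ≥ N, ∀ x : E,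
      ‖x‖ ^ k * ‖iteratedFDeriv ℝ n (u j) x - limIteratedFDeriv u n x‖ ≤ ε := by
  obtain ⟨N, hN⟩ := exists_seminorm_sub_lt_of_cauchySeq hu k n hε
  refine ⟨N, fun j hj x => le_of_tendsto
    (tendsto_const_nhds.mul ((tendsto_const_nhds.sub (tendsto_limIteratedFDeriv hu n x)).norm))
    (eventually_atTop.mpr ⟨N, fun l hl => ?_⟩)⟩
  rw [← iteratedFDeriv_sub]
  exact (le_seminorm ℝ k n _ x).trans (hN j hj l hl).le

theorem tendstoUniformly_iteratedFDeriv (hu : CauchySeq u) (n : ℕ) :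
    TendstoUniformly (fun j x => iteratedFDeriv ℝ n (u j) x) (limIteratedFDeriv u n) atTop := by
  refine Metric.tendstoUniformly_iff.mpr fun ε hε => ?_
  obtain ⟨N, hN⟩ := exists_norm_pow_mul_norm_sub_limIteratedFDeriv_le hu 0 n (half_pos hε)
  refine eventually_atTop.mpr ⟨N, fun j hj x => ?_⟩
  have hx := hN j hj x
  rw [pow_zero, one_mul] at hx
  rw [dist_comm, dist_eq_norm]
  linarith

theorem hasFTaylorSeriesUpTo_limIteratedFDeriv (hu : CauchySeq u) :
    HasFTaylorSeriesUpTo (⊤ : ℕ∞) (fun x => (limIteratedFDeriv u 0 x).curry0)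
      (fun x n => limIteratedFDeriv u n x) := by
  refine (hasFTaylorSeriesUpTo_top_iff' le_rfl).mpr ⟨fun x => rfl, fun m x => ?_⟩
  have hderiv (j : ℕ) (y : E) : HasFDerivAt (iteratedFDeriv ℝ m (u j))
      (iteratedFDeriv ℝ (m + 1) (u j) y).curryLeft y :=
    (contDiff_iff_ftaylorSeries.mp (u j).smooth').fderiv m (mod_cast WithTop.coe_lt_top _) y
  exact hasFDerivAt_of_tendstoUniformly
    ((continuousMultilinearCurryLeftEquiv ℝ (fun _ : Fin (m + 1) => E) F).isometry
      |>.uniformContinuous.comp_tendstoUniformly (tendstoUniformly_iteratedFDeriv hu (m + 1)))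
    hderiv (tendsto_limIteratedFDeriv hu m) x

theorem exists_norm_pow_mul_norm_limIteratedFDeriv_le (hu : CauchySeq u) (k n : ℕ) :
    ∃ C, ∀ x : E, ‖x‖ ^ k * ‖limIteratedFDeriv u n x‖ ≤ C := by
  obtain ⟨N, hN⟩ := exists_norm_pow_mul_norm_sub_limIteratedFDeriv_le hu k n one_pos
  refine ⟨SchwartzMap.seminorm ℝ k n (u N) + 1, fun x => ?_⟩
  calc ‖x‖ ^ k * ‖limIteratedFDeriv u n x‖
      ≤ ‖x‖ ^ k * (‖iteratedFDeriv ℝ n (u N) x‖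
          + ‖iteratedFDeriv ℝ n (u N) x - limIteratedFDeriv u n x‖) := by
        gcongr
        exact norm_le_norm_add_norm_sub _ _
    _ ≤ SchwartzMap.seminorm ℝ k n (u N) + 1 := by
        rw [mul_add]
        exact add_le_add (le_seminorm ℝ k n _ x) (hN N le_rfl x)

noncomputable def limOfCauchySeq (hu : CauchySeq u) : 𝓢(E, F) where
  toFun x := (limIteratedFDeriv u 0 x).curry0
  smooth' := (hasFTaylorSeriesUpTo_limIteratedFDeriv hu).contDiff
  decay' k n := by
    simpa only [← (hasFTaylorSeriesUpTo_limIteratedFDeriv hu).eq_iteratedFDeriv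
      (mod_cast le_top)] using exists_norm_pow_mul_norm_limIteratedFDeriv_le hu k n

theorem iteratedFDeriv_limOfCauchySeq (hu : CauchySeq u) (n : ℕ) (x : E) :
    iteratedFDeriv ℝ n (limOfCauchySeq hu) x = limIteratedFDeriv u n x :=
  ((hasFTaylorSeriesUpTo_limIteratedFDeriv hu).eq_iteratedFDeriv (mod_cast le_top) x).symm

theorem tendsto_limOfCauchySeq (hu : CauchySeq u) :
    Tendsto u atTop (𝓝 (limOfCauchySeq hu)) := by
  refine (schwartz_withSeminorms ℝ E F).tendsto_nhds_atTop _ _ |>.mpr fun ⟨k, n⟩ ε hε => ?_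
  obtain ⟨N, hN⟩ := exists_norm_pow_mul_norm_sub_limIteratedFDeriv_le hu k n (half_pos hε)
  refine ⟨N, fun j hj => (seminorm_le_bound ℝ k n _ (half_pos hε).le fun x => ?_).trans_lt
    (half_lt_self hε)⟩
  rw [iteratedFDeriv_sub, iteratedFDeriv_limOfCauchySeq]
  exact hN j hj x

instance : CompleteSpace 𝓢(E, F) :=
  UniformSpace.complete_of_cauchySeq_tendsto fun _ hu => ⟨_, tendsto_limOfCauchySeq hu⟩

end Complete

variable {𝕜 : Type*} [RCLike 𝕜] [NormedSpace 𝕜 F] [SMulCommClass ℝ 𝕜 F]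

theorem finset_sup_seminorm_le_of_tsupport_subset (s : Finset (ℕ × ℕ)) {g : 𝓢(E, F)}
    {R M : ℝ} (hR : 1 ≤ R) (hM : 0 ≤ M) (hg : tsupport g ⊆ closedBall 0 R)
    (hD : ∀ n ≤ s.sup Prod.snd, ∀ x, ‖iteratedFDeriv ℝ n g x‖ ≤ M) :
    (s.sup (schwartzSeminormFamily 𝕜 E F)) g ≤ R ^ s.sup Prod.fst * M := by
  refine Seminorm.finset_sup_apply_le (by positivity) fun ⟨k, n⟩ hkn => ?_
  refine seminorm_le_bound 𝕜 k n g (by positivity) fun x => ?_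
  by_cases hx : x ∈ tsupport g
  · have hxR : ‖x‖ ≤ R := mem_closedBall_zero_iff.mp (hg hx)
    exact mul_le_mul
      ((pow_le_pow_left₀ (norm_nonneg x) hxR k).trans
        (pow_le_pow_right₀ hR (Finset.le_sup (f := Prod.fst) hkn)))
      (hD n (Finset.le_sup (f := Prod.snd) hkn) x) (norm_nonneg _) (by positivity)
  · rw [notMem_support.mp fun h => hx (support_iteratedFDeriv_subset n h), norm_zero, mul_zero]
    positivity

/- Banach–Steinhaus applies because `𝓢(E, F)`, being complete and metrizable, is a Baire space,
hence barrelled. -/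
theorem exists_seminorm_bound_of_pointwise_bound [CompleteSpace F] {ι : Type*}
    (Λ : ι → 𝓢(E, F) →L[𝕜] 𝕜) (w : ι → ℝ) (hw : ∀ i, 0 < w i)
    (hΛ : ∀ g, ∃ C, ∀ i, ‖Λ i g‖ ≤ C * w i) :
    ∃ s : Finset (ℕ × ℕ), ∃ C : ℝ, 0 < C ∧
      ∀ i g, ‖Λ i g‖ ≤ C * (s.sup (schwartzSeminormFamily 𝕜 E F)) g * w i := by
  have hnorm (i : ι) (g : 𝓢(E, F)) : ‖((w i)⁻¹ : 𝕜) • Λ i g‖ = ‖Λ i g‖ / w i := by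
    rw [norm_smul, norm_inv, RCLike.norm_ofReal, abs_of_pos (hw i), inv_mul_eq_div]
  have hbdd : ∀ (_ : Fin 1) g,
      BddAbove (range fun i => normSeminorm 𝕜 𝕜 ((((w i)⁻¹ : 𝕜) • Λ i) g)) := by
    intro _ g
    obtain ⟨C, hC⟩ := hΛ g
    refine ⟨C, forall_mem_range.mpr fun i => ?_⟩
    change ‖((w i)⁻¹ : 𝕜) • Λ i g‖ ≤ C
    rw [hnorm, div_le_iff₀ (hw i)]
    exact hC i
  obtain ⟨q, hqc, hq⟩ :=
    ((norm_withSeminorms 𝕜 𝕜).uniformEquicontinuous_iff_exists_continuous_seminorm _).mp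
      ((norm_withSeminorms 𝕜 𝕜).banach_steinhaus hbdd) 0
  obtain ⟨s, C, hC0, hCq⟩ := Seminorm.bound_of_continuous (schwartz_withSeminorms 𝕜 E F) q hqc
  refine ⟨s, C, NNReal.coe_pos.mpr (pos_iff_ne_zero.mpr hC0), fun i g => ?_⟩
  have hle : ‖Λ i g‖ / w i ≤ C * (s.sup (schwartzSeminormFamily 𝕜 E F)) g := by
    rw [← hnorm]
    exact (Seminorm.le_def.mp (hq i) g).trans (Seminorm.le_def.mp hCq g)
  rwa [div_le_iff₀ (hw i)] at hle

end SchwartzMap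

theorem exists_contDiff_hasCompactSupport_eqOn_one {E : Type*} [NormedAddCommGroup E]
    [InnerProductSpace ℝ E] [FiniteDimensional ℝ E] (c : E) {r R : ℝ} (hr : 0 < r)
    (hrR : r < R) :
    ∃ ψ : E → ℂ, ContDiff ℝ ∞ ψ ∧ HasCompactSupport ψ ∧ tsupport ψ ⊆ closedBall c R ∧
      EqOn ψ 1 (closedBall c r) := by
  let B : ContDiffBump c := ⟨r, R, hr, hrR⟩
  refine ⟨fun t => (B t : ℂ), ofRealCLM.contDiff.comp B.contDiff,
    B.hasCompactSupport.comp_left ofReal_zero, ?_, fun t ht => ?_⟩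
  · exact (tsupport_comp_subset ofReal_zero _).trans B.tsupport_eq.subset
  · simp [B.one_of_mem_closedBall ht]

theorem norm_iteratedFDeriv_conj_comp_sub {E : Type*} [NormedAddCommGroup E]
    [NormedSpace ℝ E] (χ : E → ℂ) (x : E) (i : ℕ) (t : E) :
    ‖iteratedFDeriv ℝ i (fun s => starRingEnd ℂ (χ (s - x))) t‖ =
      ‖iteratedFDeriv ℝ i χ (t - x)‖ := by
  change ‖iteratedFDeriv ℝ i (conjLIE ∘ fun s => χ (s - x)) t‖ = _
  rw [LinearIsometryEquiv.norm_iteratedFDeriv_comp_left, iteratedFDeriv_comp_sub]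

theorem norm_iteratedFDeriv_le_supNorm {χ : EuclideanSpace ℝ (Fin d) → ℂ}
    (hχ : ContDiff ℝ ∞ χ) (hχc : HasCompactSupport χ) {i k : ℕ} (hik : i ≤ k)
    (y : EuclideanSpace ℝ (Fin d)) :
    ‖iteratedFDeriv ℝ i χ y‖ ≤ supNorm k χ :=
  (le_ciSup ((hχ.continuous_iteratedFDeriv (mod_cast le_top)).norm.bddAbove_range_of_hasCompactSupport
      (hχc.iteratedFDeriv i).norm) y).trans
    (Finset.le_sup' (fun j => ⨆ x, ‖iteratedFDeriv ℝ j χ x‖) (Finset.mem_range_succ_iff.mpr hik))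

noncomputable def cutoffModulation (ψ : EuclideanSpace ℝ (Fin d) → ℂ)
    (ξ : EuclideanSpace ℝ (Fin d)) :
    𝓢(EuclideanSpace ℝ (Fin d), ℂ) →L[ℂ] 𝓢(EuclideanSpace ℝ (Fin d), ℂ) :=
  SchwartzMap.smulLeftCLM ℂ fun t => Complex.exp (-(⟪ξ, t⟫ : ℝ) * Complex.I) * ψ t

theorem FT_eq_apply_cutoffModulation (f : 𝓢(EuclideanSpace ℝ (Fin d), ℂ) →L[ℂ] ℂ)
    {χ ψ : EuclideanSpace ℝ (Fin d) → ℂ} (hχ : ContDiff ℝ ∞ χ) (hχc : HasCompactSupport χ)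
    (hψ : ContDiff ℝ ∞ ψ) (hψc : HasCompactSupport ψ) (g : 𝓢(EuclideanSpace ℝ (Fin d), ℂ))
    (hχψ : ∀ t, χ t = ψ t * g t) (ξ : EuclideanSpace ℝ (Fin d)) :
    FT f χ hχ hχc ξ = f (cutoffModulation ψ ξ g) := by
  have hmul : (fun t => Complex.exp (-(⟪ξ, t⟫ : ℝ) * Complex.I) * ψ t).HasTemperateGrowth :=
    hψc.mul_left.hasTemperateGrowth
      ((((ofRealCLM.contDiff.comp (innerSL ℝ ξ).contDiff).neg.mul contDiff_const).cexp).mul hψ)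
  refine congrArg f (SchwartzMap.ext fun t => ?_)
  show Complex.exp _ * χ t = _
  rw [cutoffModulation, SchwartzMap.smulLeftCLM_apply_apply hmul, hχψ, smul_eq_mul]
  ring

noncomputable def stftWindow (χ : EuclideanSpace ℝ (Fin d) → ℂ) (hχ : ContDiff ℝ ∞ χ)
    (hχc : HasCompactSupport χ) (x : EuclideanSpace ℝ (Fin d)) :
    𝓢(EuclideanSpace ℝ (Fin d), ℂ) :=
  toSchwartz (fun t => starRingEnd ℂ (χ (t - x)))
    (conjCLE.contDiff.comp (hχ.comp (contDiff_id.sub contDiff_const)))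
    ((hχc.comp_left (g := starRingEnd ℂ) (map_zero _)).comp_isClosedEmbedding
      (Homeomorph.subRight x).isClosedEmbedding)

section stftWindow

variable {χ : EuclideanSpace ℝ (Fin d) → ℂ} (hχ : ContDiff ℝ ∞ χ) (hχc : HasCompactSupport χ)
  (x : EuclideanSpace ℝ (Fin d))

theorem stftWindow_apply (t : EuclideanSpace ℝ (Fin d)) :
    stftWindow χ hχ hχc x t = starRingEnd ℂ (χ (t - x)) :=
  rfl

theorem tsupport_stftWindow_subset {a : ℝ} (hχa : tsupport χ ⊆ closedBall 0 a) :
    tsupport (stftWindow χ hχ hχc x) ⊆ closedBall x a := by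
  refine closure_minimal (fun t ht => ?_) isClosed_closedBall
  have hχt : χ (t - x) ≠ 0 := fun h => ht (by rw [stftWindow_apply, h, map_zero])
  exact mem_closedBall_iff_norm.mpr (mem_closedBall_zero_iff.mp (hχa (subset_tsupport _ hχt)))

theorem norm_iteratedFDeriv_stftWindow_le {i k : ℕ} (hik : i ≤ k)
    (t : EuclideanSpace ℝ (Fin d)) :
    ‖iteratedFDeriv ℝ i (stftWindow χ hχ hχc x) t‖ ≤ supNorm k χ :=
  (norm_iteratedFDeriv_conj_comp_sub χ x i t).trans_le
    (norm_iteratedFDeriv_le_supNorm hχ hχc hik _)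

theorem STFT_eq_apply_cutoffModulation (f : 𝓢(EuclideanSpace ℝ (Fin d), ℂ) →L[ℂ] ℂ)
    {ψ : EuclideanSpace ℝ (Fin d) → ℂ} (hψ : ContDiff ℝ ∞ ψ) (hψc : HasCompactSupport ψ)
    (hψ1 : EqOn ψ 1 (tsupport (stftWindow χ hχ hχc x))) (ξ : EuclideanSpace ℝ (Fin d)) :
    STFT f χ hχ hχc x ξ = f (cutoffModulation ψ ξ (stftWindow χ hχ hχc x)) := by
  refine FT_eq_apply_cutoffModulation f _ _ hψ hψc _ (fun t => ?_) ξ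
  rw [← stftWindow_apply hχ hχc]
  by_cases ht : t ∈ tsupport (stftWindow χ hχ hχc x)
  · rw [hψ1 ht, Pi.one_apply, one_mul]
  · rw [image_eq_zero_of_notMem_tsupport ht, mul_zero]

end stftWindow

theorem stmt1_general {d : ℕ} (f : SchwartzMap (EuclideanSpace ℝ (Fin d)) ℂ →L[ℂ] ℂ)
    (x₀ : EuclideanSpace ℝ (Fin d))
    (K₁ : Set (EuclideanSpace ℝ (Fin d))) (hK₁x₀ : K₁ ∈ nhds x₀)
    (Γ : Set (EuclideanSpace ℝ (Fin d)))
    (hdecay : ∀ (n : ℕ) (χ : EuclideanSpace ℝ (Fin d) → ℂ) (hχ : ContDiff ℝ ∞ χ) (hχc : HasCompactSupport χ),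
      tsupport χ ⊆ K₁ →
      ∃ C > (0 : ℝ), ∀ ξ ∈ Γ, ‖FT f χ hχ hχc ξ‖ ≤ C * (1 + ‖ξ‖) ^ (-(n : ℝ))) :
    ∃ K : Set (EuclideanSpace ℝ (Fin d)), IsCompact K ∧ K ∈ nhds x₀ ∧
      ∀ n : ℕ, ∃ C > (0 : ℝ), ∃ k : ℕ,
        ∀ (χ : EuclideanSpace ℝ (Fin d) → ℂ) (hχ : ContDiff ℝ ∞ χ) (hχc : HasCompactSupport χ),
          tsupport χ ⊆ {y : EuclideanSpace ℝ (Fin d) | y + x₀ ∈ K} →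
          ∀ x ∈ K, ∀ ξ ∈ Γ,
            ‖STFT f χ hχ hχc x ξ‖ ≤ C * supNorm k χ * (1 + ‖ξ‖) ^ (-(n : ℝ)) := by
  obtain ⟨r, hr, hrK₁⟩ := nhds_basis_closedBall.mem_iff.mp hK₁x₀
  obtain ⟨ψ, hψ, hψc, hψK₁, hψ1⟩ :=
    exists_contDiff_hasCompactSupport_eqOn_one x₀ (half_pos hr) (half_lt_self hr)
  refine ⟨closedBall x₀ (r / 4), isCompact_closedBall _ _, closedBall_mem_nhds _ (by positivity),
    fun n => ?_⟩
  have hbound (g : 𝓢(EuclideanSpace ℝ (Fin d), ℂ)) : ∃ C, ∀ ξ : Γ,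
      ‖f (cutoffModulation ψ ξ g)‖ ≤ C * (1 + ‖(ξ : EuclideanSpace ℝ (Fin d))‖) ^ (-(n : ℝ)) := by
    obtain ⟨C, -, hC⟩ := hdecay n (fun t => ψ t * g t) (hψ.mul g.smooth') hψc.mul_right
      (tsupport_mul_subset_left.trans (hψK₁.trans hrK₁))
    exact ⟨C, fun ξ => FT_eq_apply_cutoffModulation f _ _ hψ hψc g (fun _ => rfl) ξ ▸ hC ξ ξ.2⟩
  obtain ⟨s, C, hC, hCs⟩ := SchwartzMap.exists_seminorm_bound_of_pointwise_bound
    (fun ξ : Γ => f.comp (cutoffModulation ψ ξ)) _ (fun ξ => by positivity) hbound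
  set R := 1 + ‖x₀‖ + r
  refine ⟨C * R ^ s.sup Prod.fst, by positivity, s.sup Prod.snd,
    fun χ hχ hχc hχK x hx ξ hξ => ?_⟩
  have hwx := tsupport_stftWindow_subset hχ hχc x (a := r / 4) fun y hy => by simpa using hχK hy
  have hxx₀ : closedBall x (r / 4) ⊆ closedBall x₀ (r / 2) :=
    closedBall_subset_closedBall' (by linarith [mem_closedBall.mp hx])
  have hx₀R : closedBall x₀ (r / 2) ⊆ closedBall 0 R :=
    closedBall_subset_closedBall' (by rw [dist_zero_right]; linarith)
  have hseminorm := SchwartzMap.finset_sup_seminorm_le_of_tsupport_subset (𝕜 := ℂ) s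
    (by linarith [norm_nonneg x₀] : 1 ≤ R)
    ((norm_nonneg _).trans (norm_iteratedFDeriv_le_supNorm hχ hχc (Nat.zero_le _) 0))
    (hwx.trans (hxx₀.trans hx₀R)) fun i hi t => norm_iteratedFDeriv_stftWindow_le hχ hχc x hi t
  calc ‖STFT f χ hχ hχc x ξ‖ = ‖f (cutoffModulation ψ ξ (stftWindow χ hχ hχc x))‖ := by
        rw [STFT_eq_apply_cutoffModulation hχ hχc x f hψ hψc (hψ1.mono (hwx.trans hxx₀))]
    _ ≤ C * (s.sup (schwartzSeminormFamily ℂ _ ℂ)) (stftWindow χ hχ hχc x) *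
          (1 + ‖ξ‖) ^ (-(n : ℝ)) := hCs ⟨ξ, hξ⟩ _
    _ ≤ C * (R ^ s.sup Prod.fst * supNorm (s.sup Prod.snd) χ) * (1 + ‖ξ‖) ^ (-(n : ℝ)) := by
        gcongr
    _ = C * R ^ s.sup Prod.fst * supNorm (s.sup Prod.snd) χ * (1 + ‖ξ‖) ^ (-(n : ℝ)) := by
        ring

/-- Theorem 1.1, (ii) ⇒ (iii). -/
theorem stmt1 {d : ℕ} (f : SchwartzMap (EuclideanSpace ℝ (Fin d)) ℂ →L[ℂ] ℂ)
    (x₀ ξ₀ : EuclideanSpace ℝ (Fin d)) (hξ₀ : ξ₀ ≠ 0)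
    (K₁ : Set (EuclideanSpace ℝ (Fin d))) (hK₁ : IsCompact K₁) (hK₁x₀ : K₁ ∈ nhds x₀)
    (Γ : Set (EuclideanSpace ℝ (Fin d))) (hΓ : IsConeNbhd Γ ξ₀)
    (hdecay : ∀ (n : ℕ) (χ : EuclideanSpace ℝ (Fin d) → ℂ) (hχ : ContDiff ℝ ∞ χ) (hχc : HasCompactSupport χ),
      tsupport χ ⊆ K₁ →
      ∃ C > (0 : ℝ), ∀ ξ ∈ Γ, ‖FT f χ hχ hχc ξ‖ ≤ C * (1 + ‖ξ‖) ^ (-(n : ℝ))) :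
    ∃ K : Set (EuclideanSpace ℝ (Fin d)), IsCompact K ∧ K ∈ nhds x₀ ∧
      ∀ n : ℕ, ∃ C > (0 : ℝ), ∃ k : ℕ,
        ∀ (χ : EuclideanSpace ℝ (Fin d) → ℂ) (hχ : ContDiff ℝ ∞ χ) (hχc : HasCompactSupport χ),
          tsupport χ ⊆ {y : EuclideanSpace ℝ (Fin d) | y + x₀ ∈ K} →
          ∀ x ∈ K, ∀ ξ ∈ Γ,
            ‖STFT f χ hχ hχc x ξ‖ ≤ C * supNorm k χ * (1 + ‖ξ‖) ^ (-(n : ℝ)) :=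
  stmt1_general f x₀ K₁ hK₁x₀ Γ hdecay
end

section
/- Let Γ, Γ' ⊆ ℝ^d \ {0} be cones, let 0 < c < 1 satisfy {η ∈ ℝ^d : ∃ ξ ∈ Γ with |ξ − η| ≤ c|ξ|} ⊆ Γ', let s ≥ 0, let g : ℝ^d → ℂ be measurable with C_g := (∫_{Γ'} ⟨ξ⟩^{2s}|g(ξ)|² dξ)^{1/2} < ∞, and let h ∈ L¹(ℝ^d). Then ∫_{ℝ^d} |h(η)| (∫_{{ξ ∈ Γ : |ξ| ≥ |η|/c}} ⟨ξ⟩^{2s} |g(ξ−η)|² dξ)^{1/2} dη ≤ (1−c)^{-s} · C_g · ‖h‖_{L¹(ℝ^d)}. (Estimate of the term I₁ in the proof of Theorem 1.2, (i) ⇒ (ii).) -/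
/-! On the region `|ξ| ≥ |η| / c` we have `|ξ - η| ≥ (1 - c) |ξ|` and `ξ - η ∈ Γ'`, hence
`⟨ξ⟩^{2s} ≤ (1 - c)^{-2s} ⟨ξ - η⟩^{2s}`. After the translation `ξ ↦ ξ - η` the inner integral is
therefore at most `(1 - c)^{-2s} C_g²` uniformly in `η`, and integrating against `|h|` gives the
bound. -/

set_option maxHeartbeats 1000000

open MeasureTheory Complex
open scoped ContDiff InnerProductSpace ENNReal RealInnerProductSpace

variable {d : ℕ}

lemma one_add_sq_rpow_le_of_mul_le {θ a b s : ℝ} (hθ0 : 0 < θ) (hθ1 : θ ≤ 1) (ha : 0 ≤ a)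
    (hab : θ * a ≤ b) (hs : 0 ≤ s) :
    (1 + a ^ 2) ^ s ≤ θ ^ (-(2 * s)) * (1 + b ^ 2) ^ s := by
  have hbase : θ ^ 2 * (1 + a ^ 2) ≤ 1 + b ^ 2 := by
    nlinarith [mul_le_mul hab hab (by positivity) (by linarith [mul_nonneg hθ0.le ha])]
  have hpow : θ ^ (2 * s) * (1 + a ^ 2) ^ s ≤ (1 + b ^ 2) ^ s := by
    rw [Real.rpow_mul hθ0.le, Real.rpow_two, ← Real.mul_rpow (by positivity) (by positivity)]
    exact Real.rpow_le_rpow (by positivity) hbase hs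
  rw [Real.rpow_neg hθ0.le, ← div_eq_inv_mul, le_div_iff₀' (by positivity)]
  exact hpow

lemma one_add_norm_sq_rpow_le {E : Type*} [SeminormedAddCommGroup E] {c s : ℝ} (hc0 : 0 ≤ c)
    (hc1 : c < 1) (hs : 0 ≤ s) {ξ η : E} (hη : ‖η‖ ≤ c * ‖ξ‖) :
    (1 + ‖ξ‖ ^ 2) ^ s ≤ (1 - c) ^ (-(2 * s)) * (1 + ‖ξ - η‖ ^ 2) ^ s :=
  one_add_sq_rpow_le_of_mul_le (by linarith) (by linarith)
    (norm_nonneg ξ) (by linarith [norm_sub_norm_le ξ η]) hs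

lemma setLIntegral_comp_sub_le {G : Type*} [MeasurableSpace G] [AddGroup G] [MeasurableAdd G]
    (μ : Measure G) [μ.IsAddRightInvariant] (f : G → ℝ≥0∞) {S T : Set G} {η : G}
    (hST : ∀ ξ ∈ S, ξ - η ∈ T) :
    ∫⁻ ξ in S, f (ξ - η) ∂μ ≤ ∫⁻ ζ in T, f ζ ∂μ := by
  set e := MeasurableEquiv.subRight η
  calc ∫⁻ ξ in S, f (ξ - η) ∂μ ≤ ∫⁻ ξ in e ⁻¹' T, f (e ξ) ∂μ :=
        lintegral_mono' (Measure.restrict_mono hST le_rfl) le_rfl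
    _ = ∫⁻ ζ, f ζ ∂(μ.restrict (e ⁻¹' T)).map e := (lintegral_map_equiv f e).symm
    _ = ∫⁻ ζ in T, f ζ ∂μ := by
        rw [← e.measurableEmbedding.restrict_map, show ⇑e = (· - η) from rfl,
          (measurePreserving_sub_right μ η).map_eq]

lemma measurable_weighted_sq {E : Type*} [NormedAddCommGroup E] [MeasurableSpace E]
    [OpensMeasurableSpace E] (s : ℝ) {g : E → ℂ} (hg : Measurable g) :
    Measurable fun ζ => ENNReal.ofReal ((1 + ‖ζ‖ ^ 2) ^ s) * (‖g ζ‖₊ : ℝ≥0∞) ^ 2 := by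
  have hw : Continuous fun ζ : E => (1 + ‖ζ‖ ^ 2) ^ s :=
    (continuous_const.add (continuous_norm.pow 2)).rpow_const fun ζ =>
      Or.inl (by positivity : (0 : ℝ) < 1 + ‖ζ‖ ^ 2).ne'
  exact ENNReal.measurable_ofReal.comp hw.measurable |>.mul (by fun_prop)

lemma lintegral_weighted_sq_translate_le {d : ℕ} {Γ Γ' : Set (EuclideanSpace ℝ (Fin d))}
    {c : ℝ} (hc0 : 0 < c) (hc1 : c < 1)
    (hsub : {η : EuclideanSpace ℝ (Fin d) | ∃ ξ ∈ Γ, ‖ξ - η‖ ≤ c * ‖ξ‖} ⊆ Γ')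
    {s : ℝ} (hs : 0 ≤ s) {g : EuclideanSpace ℝ (Fin d) → ℂ} (hg : Measurable g)
    (η : EuclideanSpace ℝ (Fin d)) :
    ∫⁻ ξ in {ξ ∈ Γ | ‖η‖ / c ≤ ‖ξ‖},
        ENNReal.ofReal ((1 + ‖ξ‖ ^ 2) ^ s) * (‖g (ξ - η)‖₊ : ℝ≥0∞) ^ 2 ≤
      ENNReal.ofReal ((1 - c) ^ (-(2 * s))) * sqIntCone s Γ' g := by
  set K := ENNReal.ofReal ((1 - c) ^ (-(2 * s)))
  set w := fun ζ : EuclideanSpace ℝ (Fin d) =>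
    ENNReal.ofReal ((1 + ‖ζ‖ ^ 2) ^ s) * (‖g ζ‖₊ : ℝ≥0∞) ^ 2
  have hη : ∀ ξ ∈ {ξ ∈ Γ | ‖η‖ / c ≤ ‖ξ‖}, ‖η‖ ≤ c * ‖ξ‖ := fun ξ hξ => by
    rw [mul_comm, ← div_le_iff₀ hc0]; exact hξ.2
  calc _ ≤ ∫⁻ ξ in {ξ ∈ Γ | ‖η‖ / c ≤ ‖ξ‖}, K * w (ξ - η) := by
        refine setLIntegral_mono (((measurable_weighted_sq s hg).comp
          (measurable_sub_const η)).const_mul K) fun ξ hξ => ?_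
        rw [← mul_assoc, ← ENNReal.ofReal_mul (by positivity)]
        gcongr
        exact one_add_norm_sq_rpow_le hc0.le hc1 hs (hη ξ hξ)
    _ = K * ∫⁻ ξ in {ξ ∈ Γ | ‖η‖ / c ≤ ‖ξ‖}, w (ξ - η) :=
        lintegral_const_mul' _ _ ENNReal.ofReal_ne_top
    _ ≤ K * sqIntCone s Γ' g := by
        gcongr
        exact setLIntegral_comp_sub_le volume w fun ξ hξ =>
          hsub ⟨ξ, hξ.1, by simpa using hη ξ hξ⟩

theorem stmt12_general {d : ℕ} (Γ Γ' : Set (EuclideanSpace ℝ (Fin d)))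
    (c : ℝ) (hc0 : 0 < c) (hc1 : c < 1)
    (hsub : {η : EuclideanSpace ℝ (Fin d) | ∃ ξ ∈ Γ, ‖ξ - η‖ ≤ c * ‖ξ‖} ⊆ Γ')
    (s : ℝ) (hs : 0 ≤ s)
    (g : EuclideanSpace ℝ (Fin d) → ℂ) (hg : Measurable g) (hCg : sqIntCone s Γ' g < ⊤)
    (h : EuclideanSpace ℝ (Fin d) → ℂ) :
    ∫⁻ η, (‖h η‖₊ : ℝ≥0∞) *
        (∫⁻ ξ in {ξ ∈ Γ | ‖η‖ / c ≤ ‖ξ‖},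
          ENNReal.ofReal ((1 + ‖ξ‖ ^ 2) ^ s) * (‖g (ξ - η)‖₊ : ℝ≥0∞) ^ 2) ^ (1 / 2 : ℝ) ≤
      ENNReal.ofReal ((1 - c) ^ (-s)) * l2Cone s Γ' g * ∫⁻ η, (‖h η‖₊ : ℝ≥0∞) := by
  have hK : ENNReal.ofReal ((1 - c) ^ (-(2 * s))) ^ (1 / 2 : ℝ) =
      ENNReal.ofReal ((1 - c) ^ (-s)) := by
    rw [ENNReal.ofReal_rpow_of_nonneg (by bound) (by norm_num), ← Real.rpow_mul (by linarith)]
    ring_nf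
  have hbound : ∀ η, (∫⁻ ξ in {ξ ∈ Γ | ‖η‖ / c ≤ ‖ξ‖},
      ENNReal.ofReal ((1 + ‖ξ‖ ^ 2) ^ s) * (‖g (ξ - η)‖₊ : ℝ≥0∞) ^ 2) ^ (1 / 2 : ℝ) ≤
        ENNReal.ofReal ((1 - c) ^ (-s)) * l2Cone s Γ' g := fun η => by
    rw [l2Cone, ← hK, ← ENNReal.mul_rpow_of_nonneg _ _ (by norm_num)]
    gcongr
    exact lintegral_weighted_sq_translate_le hc0 hc1 hsub hs hg η
  have hfin : ENNReal.ofReal ((1 - c) ^ (-s)) * l2Cone s Γ' g ≠ ⊤ :=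
    ENNReal.mul_ne_top ENNReal.ofReal_ne_top (ENNReal.rpow_ne_top_of_nonneg (by norm_num) hCg.ne)
  calc _ ≤ ∫⁻ η, (‖h η‖₊ : ℝ≥0∞) * (ENNReal.ofReal ((1 - c) ^ (-s)) * l2Cone s Γ' g) := by
        gcongr with η; exact hbound η
    _ = _ := by rw [lintegral_mul_const' _ _ hfin, mul_comm]

/-- Estimate of the term `I₁` in the proof of Theorem 1.2, (i) ⇒ (ii). -/
theorem stmt12 {d : ℕ} (Γ Γ' : Set (EuclideanSpace ℝ (Fin d))) (hΓ : IsCone Γ) (hΓ' : IsCone Γ')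
    (c : ℝ) (hc0 : 0 < c) (hc1 : c < 1)
    (hsub : {η : EuclideanSpace ℝ (Fin d) | ∃ ξ ∈ Γ, ‖ξ - η‖ ≤ c * ‖ξ‖} ⊆ Γ')
    (s : ℝ) (hs : 0 ≤ s)
    (g : EuclideanSpace ℝ (Fin d) → ℂ) (hg : Measurable g) (hCg : sqIntCone s Γ' g < ⊤)
    (h : EuclideanSpace ℝ (Fin d) → ℂ) (hh : MeasureTheory.Integrable h) :
    ∫⁻ η, (‖h η‖₊ : ℝ≥0∞) *
        (∫⁻ ξ in {ξ ∈ Γ | ‖η‖ / c ≤ ‖ξ‖},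
          ENNReal.ofReal ((1 + ‖ξ‖ ^ 2) ^ s) * (‖g (ξ - η)‖₊ : ℝ≥0∞) ^ 2) ^ (1 / 2 : ℝ) ≤
      ENNReal.ofReal ((1 - c) ^ (-s)) * l2Cone s Γ' g * ∫⁻ η, (‖h η‖₊ : ℝ≥0∞) :=
  stmt12_general Γ Γ' c hc0 hc1 hsub s hs g hg hCg h
end

section
/- Let Γ, Γ' ⊆ ℝ^d \ {0} be cones, let 0 < c < 1 satisfy {η ∈ ℝ^d : ∃ ξ ∈ Γ with |ξ − η| ≤ c|ξ|} ⊆ Γ', let s ≥ 0 and m ≥ 1, and let g : ℝ^d → ℂ be measurable with |g(ξ)| ≤ C₁⟨ξ⟩^m for all ξ ∈ ℝ^d (some C₁ ≥ 1) and with C_g := (∫_{Γ'} ⟨ξ⟩^{2s}|g(ξ)|² dξ)^{1/2} < ∞. Then there exists a constant C > 0, depending only on d, s, m, c, C₁ and C_g, such that for every measurable h : ℝ^d → ℂ with ∫_{ℝ^d} ⟨η⟩^{s+m+d+1}|h(η)| dη < ∞ one has (∫_Γ ⟨ξ⟩^{2s} |(h * g)(ξ)|² dξ)^{1/2} ≤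 C · ∫_{ℝ^d} ⟨η⟩^{s+m+d+1}|h(η)| dη, where (h*g)(ξ) = ∫_{ℝ^d} h(η) g(ξ−η) dη. (Weighted L² convolution estimate on cones established in the proof of Theorem 1.2, (i) ⇒ (ii).) -/
/-!
For `ξ ∈ Γ` split the convolution integral at `‖η‖ = c‖ξ‖`. Where `‖η‖ ≤ c‖ξ‖` the point `ξ - η`
lies in `Γ'`, so this part is a convolution of `|h|` with `1_{Γ'} |g|`; Peetre's inequality
`⟨ξ⟩^s ≤ 2^{s/2} ⟨η⟩^s ⟨ξ - η⟩^s` and Young's inequality `L¹ ⋆ L² ⊆ L²` bound its weighted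
`L²` norm by `2^{s/2} C_g ‖⟨·⟩^s h‖_{L¹}`. Where `‖η‖ > c‖ξ‖` both `⟨ξ⟩` and `⟨ξ - η⟩` are
`≲ ⟨η⟩`, so the polynomial bound on `g` gives `⟨ξ⟩^{s+d+1} |far part| ≲ ‖⟨·⟩^{s+m+d+1} h‖_{L¹}`,
and `⟨ξ⟩^{-(d+1)}` is square integrable.
-/

set_option maxHeartbeats 1000000

open MeasureTheory Complex
open scoped ContDiff InnerProductSpace ENNReal RealInnerProductSpace

variable {d : ℕ}

lemma ENNReal.add_sq_le_two_mul (a b : ℝ≥0∞) : (a + b) ^ 2 ≤ 2 * (a ^ 2 + b ^ 2) := by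
  have := ENNReal.rpow_add_le_mul_rpow_add_rpow a b one_le_two
  norm_num [ENNReal.rpow_two] at this
  exact this

section LConvolution

variable {G : Type*} [MeasurableSpace G] [AddGroup G] [MeasurableAdd₂ G] [MeasurableNeg G]
  {μ : Measure G} {f g : G → ℝ≥0∞}

/-- Cauchy–Schwarz against the measure `f y ∂μ y`. -/
theorem lconvolution_sq_le (hf : Measurable f) (hg : Measurable g) (x : G) :
    (f ⋆ₗ[μ] g) x ^ 2 ≤ (∫⁻ y, f y ∂μ) * (f ⋆ₗ[μ] fun z => g z ^ 2) x := by
  have hsplit : ∀ y, f y * g (-y + x) = f y ^ (2⁻¹ : ℝ) * (f y * g (-y + x) ^ 2) ^ (2⁻¹ : ℝ) := by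
    intro y
    rw [← ENNReal.mul_rpow_of_nonneg _ _ (by norm_num), ← mul_assoc, ← sq, ← mul_pow,
      ← ENNReal.rpow_natCast, ← ENNReal.rpow_mul]
    norm_num
  have holder := ENNReal.lintegral_mul_norm_pow_le (μ := μ) (p := 2⁻¹) (q := 2⁻¹)
    hf.aemeasurable (g := fun y => f y * g (-y + x) ^ 2) (by fun_prop)
    (by norm_num) (by norm_num) (by norm_num)
  simp only [lconvolution_def]
  calc (∫⁻ y, f y * g (-y + x) ∂μ) ^ 2
      ≤ ((∫⁻ y, f y ∂μ) ^ (2⁻¹ : ℝ) * (∫⁻ y, f y * g (-y + x) ^ 2 ∂μ) ^ (2⁻¹ : ℝ)) ^ 2 := by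
        simp_rw [hsplit]; gcongr
    _ = (∫⁻ y, f y ∂μ) * ∫⁻ y, f y * g (-y + x) ^ 2 ∂μ := by
        simp only [mul_pow, ← ENNReal.rpow_natCast, ← ENNReal.rpow_mul]
        norm_num

variable [SFinite μ] [μ.IsAddLeftInvariant]

theorem lintegral_lconvolution (hf : Measurable f) (hg : Measurable g) :
    ∫⁻ x, (f ⋆ₗ[μ] g) x ∂μ = (∫⁻ x, f x ∂μ) * ∫⁻ x, g x ∂μ := by
  simp only [lconvolution_def]
  rw [lintegral_lintegral_swap (by fun_prop), ← lintegral_mul_const _ hf]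
  refine lintegral_congr fun y => ?_
  rw [lintegral_const_mul _ (by fun_prop), lintegral_add_left_eq_self g (-y)]

theorem lintegral_lconvolution_sq_le (hf : Measurable f) (hg : Measurable g) :
    ∫⁻ x, (f ⋆ₗ[μ] g) x ^ 2 ∂μ ≤ (∫⁻ x, f x ∂μ) ^ 2 * ∫⁻ x, g x ^ 2 ∂μ :=
  calc ∫⁻ x, (f ⋆ₗ[μ] g) x ^ 2 ∂μ
      ≤ ∫⁻ x, (∫⁻ y, f y ∂μ) * (f ⋆ₗ[μ] fun z => g z ^ 2) x ∂μ :=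
        lintegral_mono (lconvolution_sq_le hf hg)
    _ = (∫⁻ x, f x ∂μ) ^ 2 * ∫⁻ x, g x ^ 2 ∂μ := by
        rw [lintegral_const_mul _ (measurable_lconvolution μ hf (hg.pow_const 2)),
          lintegral_lconvolution hf (hg.pow_const 2), ← mul_assoc, ← sq]

end LConvolution

section BracketWeight

variable {E F : Type*} [NormedAddCommGroup E] [NormedAddCommGroup F]

/-- `⟨x⟩ ^ (2 * a)` in the notation of the paper. -/
noncomputable def bracketWeight (a : ℝ) (x : E) : ℝ≥0∞ :=
  ENNReal.ofReal ((1 + ‖x‖ ^ 2) ^ a)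

lemma bracketWeight_add (a b : ℝ) (x : E) :
    bracketWeight (a + b) x = bracketWeight a x * bracketWeight b x := by
  rw [bracketWeight, Real.rpow_add (by positivity), ENNReal.ofReal_mul (by positivity)]
  rfl

lemma bracketWeight_zero (x : E) : bracketWeight 0 x = 1 := by
  simp [bracketWeight]

lemma bracketWeight_half_sq (a : ℝ) (x : E) : bracketWeight (a / 2) x ^ 2 = bracketWeight a x := by
  rw [sq, ← bracketWeight_add, add_halves]

lemma bracketWeight_mono {a b : ℝ} (hab : a ≤ b) (x : E) : bracketWeight a x ≤ bracketWeight b x :=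
  ENNReal.ofReal_le_ofReal <|
    Real.rpow_le_rpow_of_exponent_le (le_add_of_nonneg_right (by positivity)) hab

@[fun_prop]
lemma measurable_bracketWeight [MeasurableSpace E] [OpensMeasurableSpace E] (a : ℝ) :
    Measurable (bracketWeight (E := E) a) := by
  unfold bracketWeight; fun_prop

lemma bracketWeight_add_le {a : ℝ} (ha : 0 ≤ a) (x y : E) :
    bracketWeight a (x + y) ≤ ENNReal.ofReal (2 ^ a) * bracketWeight a x * bracketWeight a y := by
  have key : 1 + ‖x + y‖ ^ 2 ≤ 2 * (1 + ‖x‖ ^ 2) * (1 + ‖y‖ ^ 2) := by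
    nlinarith [norm_add_le x y, norm_nonneg (x + y), norm_nonneg x, norm_nonneg y,
      sq_nonneg (‖x‖ - ‖y‖), sq_nonneg (‖x‖ * ‖y‖)]
  rw [bracketWeight, bracketWeight, bracketWeight, ← ENNReal.ofReal_mul (by positivity),
    ← ENNReal.ofReal_mul (by positivity), ← Real.mul_rpow (by positivity) (by positivity),
    ← Real.mul_rpow (by positivity) (by positivity)]
  exact ENNReal.ofReal_le_ofReal (Real.rpow_le_rpow (by positivity) key ha)

lemma bracketWeight_le_of_norm_le {a K : ℝ} (ha : 0 ≤ a) (hK : 1 ≤ K) {x : E} {y : F}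
    (hxy : ‖x‖ ≤ K * ‖y‖) :
    bracketWeight a x ≤ ENNReal.ofReal (K ^ (2 * a)) * bracketWeight a y := by
  have key : 1 + ‖x‖ ^ 2 ≤ K ^ 2 * (1 + ‖y‖ ^ 2) := by
    nlinarith [mul_self_le_mul_self (norm_nonneg x) hxy, norm_nonneg y]
  rw [bracketWeight, bracketWeight, ← ENNReal.ofReal_mul (by positivity), Real.rpow_mul (by positivity),
    ← Real.mul_rpow (by positivity) (by positivity), Real.rpow_two]
  exact ENNReal.ofReal_le_ofReal (Real.rpow_le_rpow (by positivity) key ha)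

lemma lintegral_bracketWeight_lt_top [InnerProductSpace ℝ E] [FiniteDimensional ℝ E]
    [MeasurableSpace E] [BorelSpace E] (μ : Measure E) [μ.IsAddHaarMeasure] {a : ℝ}
    (ha : (Module.finrank ℝ E : ℝ) < -(2 * a)) :
    ∫⁻ x, bracketWeight a x ∂μ < ⊤ := by
  have := (integrable_rpow_neg_one_add_norm_sq (μ := μ) ha).hasFiniteIntegral
  rw [neg_neg, mul_div_cancel_left₀ _ two_ne_zero] at this
  exact lt_of_le_of_lt (lintegral_mono fun x => Real.ofReal_le_enorm _) this

end BracketWeight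

section Convolution

variable {E : Type*} [NormedAddCommGroup E]

theorem lintegral_bracketWeight_mul_lconvolution_sq_le [MeasurableSpace E] [BorelSpace E]
    [SecondCountableTopology E] {μ : Measure E} [SFinite μ] [μ.IsAddLeftInvariant]
    {s : ℝ} (hs : 0 ≤ s) {f g : E → ℝ≥0∞} (hf : Measurable f) (hg : Measurable g) :
    ∫⁻ x, bracketWeight s x * (f ⋆ₗ[μ] g) x ^ 2 ∂μ ≤
      ENNReal.ofReal (2 ^ s) * (∫⁻ x, bracketWeight (s / 2) x * f x ∂μ) ^ 2 *
        ∫⁻ x, bracketWeight s x * g x ^ 2 ∂μ := by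
  set v : E → ℝ≥0∞ := bracketWeight (s / 2)
  have hv : ∀ x, v x ^ 2 = bracketWeight s x := bracketWeight_half_sq s
  have hpeetre : ∀ x,
      v x * (f ⋆ₗ[μ] g) x ≤ ENNReal.ofReal (2 ^ (s / 2)) * ((v * f) ⋆ₗ[μ] (v * g)) x := by
    intro x
    simp only [lconvolution_def, Pi.mul_apply]
    rw [← lintegral_const_mul' (v x) _ ENNReal.ofReal_ne_top,
      ← lintegral_const_mul' _ _ ENNReal.ofReal_ne_top]
    refine lintegral_mono fun y => ?_
    calc v x * (f y * g (-y + x)) = v (y + (-y + x)) * (f y * g (-y + x)) := by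
          rw [add_neg_cancel_left]
      _ ≤ ENNReal.ofReal (2 ^ (s / 2)) * v y * v (-y + x) * (f y * g (-y + x)) := by
          gcongr; exact bracketWeight_add_le (by positivity) _ _
      _ = _ := by ring
  have hconst : ENNReal.ofReal (2 ^ (s / 2)) ^ 2 = ENNReal.ofReal (2 ^ s) := by
    rw [← ENNReal.ofReal_pow (by positivity), ← Real.rpow_natCast, ← Real.rpow_mul (by norm_num)]
    norm_num
  calc ∫⁻ x, bracketWeight s x * (f ⋆ₗ[μ] g) x ^ 2 ∂μ
      = ∫⁻ x, (v x * (f ⋆ₗ[μ] g) x) ^ 2 ∂μ := by simp_rw [mul_pow, hv]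
    _ ≤ ∫⁻ x, ENNReal.ofReal (2 ^ s) * ((v * f) ⋆ₗ[μ] (v * g)) x ^ 2 ∂μ := by
        gcongr with x
        rw [← hconst, ← mul_pow]
        exact pow_le_pow_left' (hpeetre x) 2
    _ ≤ ENNReal.ofReal (2 ^ s) * ((∫⁻ x, (v * f) x ∂μ) ^ 2 * ∫⁻ x, (v * g) x ^ 2 ∂μ) := by
        rw [lintegral_const_mul _ (by fun_prop)]
        gcongr
        exact lintegral_lconvolution_sq_le (by fun_prop) (by fun_prop)
    _ = _ := by simp_rw [Pi.mul_apply, mul_pow, hv, mul_assoc]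

variable {c C₁ m e : ℝ} {g : E → ℂ}

lemma enorm_apply_sub_le_of_mul_norm_le (hc0 : 0 < c) (hc1 : c ≤ 1) (hm : 0 ≤ m) (he : 0 ≤ e)
    (hgb : ∀ ζ, ‖g ζ‖ ≤ C₁ * (1 + ‖ζ‖ ^ 2) ^ (m / 2)) {ξ η : E} (hfar : c * ‖ξ‖ ≤ ‖η‖) :
    ‖g (ξ - η)‖ₑ ≤ ENNReal.ofReal (C₁ * ((1 + c⁻¹) ^ m * c⁻¹ ^ (2 * e))) *
      bracketWeight (-e) ξ * bracketWeight (e + m / 2) η := by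
  have hc : 1 ≤ c⁻¹ := one_le_inv₀ hc0 |>.mpr hc1
  have hξ : ‖ξ‖ ≤ c⁻¹ * ‖η‖ := by rwa [inv_mul_eq_div, le_div_iff₀' hc0]
  have hξη : ‖ξ - η‖ ≤ (1 + c⁻¹) * ‖η‖ := by linarith [norm_sub_le ξ η]
  have hg : ‖g (ξ - η)‖ₑ ≤ ENNReal.ofReal C₁ * bracketWeight (m / 2) (ξ - η) := by
    rw [← ofReal_norm, bracketWeight, ← ENNReal.ofReal_mul' (by positivity)]
    exact ENNReal.ofReal_le_ofReal (hgb _)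
  have hdiff : bracketWeight (m / 2) (ξ - η) ≤
      ENNReal.ofReal ((1 + c⁻¹) ^ m) * bracketWeight (m / 2) η := by
    simpa [mul_div_cancel₀] using
      bracketWeight_le_of_norm_le (a := m / 2) (by positivity) (by linarith) hξη
  have hone : 1 ≤ bracketWeight (-e) ξ * (ENNReal.ofReal (c⁻¹ ^ (2 * e)) * bracketWeight e η) := by
    calc 1 = bracketWeight (-e) ξ * bracketWeight e ξ := by
          rw [← bracketWeight_add, neg_add_cancel, bracketWeight_zero]
      _ ≤ _ := by gcongr; exact bracketWeight_le_of_norm_le he hc hξ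
  calc ‖g (ξ - η)‖ₑ
      ≤ ENNReal.ofReal C₁ * (ENNReal.ofReal ((1 + c⁻¹) ^ m) * bracketWeight (m / 2) η) *
          (bracketWeight (-e) ξ * (ENNReal.ofReal (c⁻¹ ^ (2 * e)) * bracketWeight e η)) := by
        calc ‖g (ξ - η)‖ₑ ≤ ENNReal.ofReal C₁ * bracketWeight (m / 2) (ξ - η) * 1 := by
              rw [mul_one]; exact hg
          _ ≤ _ := by gcongr
    _ = _ := by
        rw [bracketWeight_add, ENNReal.ofReal_mul' (by positivity),
          ENNReal.ofReal_mul (by positivity)]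
        ring

lemma enorm_integral_mul_sub_le [MeasurableSpace E] [BorelSpace E] {μ : Measure E}
    {h : E → ℂ} (hh : Measurable h) (hc0 : 0 < c) (hc1 : c ≤ 1) (hm : 0 ≤ m) (he : 0 ≤ e)
    (hgb : ∀ ζ, ‖g ζ‖ ≤ C₁ * (1 + ‖ζ‖ ^ 2) ^ (m / 2)) {S : Set E} {ξ : E}
    (hnear : ∀ η, ‖η‖ ≤ c * ‖ξ‖ → ξ - η ∈ S) :
    ‖∫ η, h η * g (ξ - η) ∂μ‖ₑ ≤ ((fun η => ‖h η‖ₑ) ⋆ₗ[μ] S.indicator fun ζ => ‖g ζ‖ₑ) ξ +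
      ENNReal.ofReal (C₁ * ((1 + c⁻¹) ^ m * c⁻¹ ^ (2 * e))) * bracketWeight (-e) ξ *
        ∫⁻ η, bracketWeight (e + m / 2) η * ‖h η‖ₑ ∂μ := by
  rw [lconvolution_def, ← lintegral_const_mul _ (by fun_prop),
    ← lintegral_add_right _ (by fun_prop)]
  refine (enorm_integral_le_lintegral_enorm _).trans (lintegral_mono fun η => ?_)
  rw [enorm_mul, neg_add_eq_sub]
  rcases le_or_gt ‖η‖ (c * ‖ξ‖) with hη | hη
  · rw [Set.indicator_of_mem (hnear η hη)]
    exact le_self_add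
  · calc ‖h η‖ₑ * ‖g (ξ - η)‖ₑ
        ≤ ‖h η‖ₑ * (ENNReal.ofReal (C₁ * ((1 + c⁻¹) ^ m * c⁻¹ ^ (2 * e))) *
            bracketWeight (-e) ξ * bracketWeight (e + m / 2) η) := by
          gcongr; exact enorm_apply_sub_le_of_mul_norm_le hc0 hc1 hm he hgb hη.le
      _ = _ := by ring
      _ ≤ _ := le_add_self

end Convolution

lemma sqIntCone_eq_lintegral_indicator (s : ℝ) (Γ : Set (EuclideanSpace ℝ (Fin d)))
    (g : EuclideanSpace ℝ (Fin d) → ℂ) :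
    sqIntCone s Γ g =
      ∫⁻ ξ, bracketWeight s ξ * (toMeasurable volume Γ).indicator (fun ζ => ‖g ζ‖ₑ) ξ ^ 2 := by
  rw [sqIntCone, ← Measure.restrict_toMeasurable_of_sFinite,
    ← lintegral_indicator (measurableSet_toMeasurable _ _)]
  congr with ξ
  by_cases hξ : ξ ∈ toMeasurable volume Γ <;> simp [hξ, bracketWeight, enorm]

lemma lintegral_bracketWeight_mul_lconvolution_indicator_sq_le {s : ℝ} (hs : 0 ≤ s)
    {g h : EuclideanSpace ℝ (Fin d) → ℂ} (hg : Measurable g) (hh : Measurable h)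
    (Γ : Set (EuclideanSpace ℝ (Fin d))) :
    ∫⁻ ξ, bracketWeight s ξ *
        ((fun η => ‖h η‖ₑ) ⋆ₗ (toMeasurable volume Γ).indicator fun ζ => ‖g ζ‖ₑ) ξ ^ 2 ≤
      ENNReal.ofReal (2 ^ s) * (∫⁻ η, bracketWeight (s / 2) η * ‖h η‖ₑ) ^ 2 * sqIntCone s Γ g := by
  rw [sqIntCone_eq_lintegral_indicator]
  exact lintegral_bracketWeight_mul_lconvolution_sq_le hs (by fun_prop)
    (hg.enorm.indicator (measurableSet_toMeasurable _ _))

theorem sqIntCone_convolution_le {Γ Γ' : Set (EuclideanSpace ℝ (Fin d))} {c s m C₁ : ℝ}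
    (hc0 : 0 < c) (hc1 : c ≤ 1) (hsub : {η | ∃ ξ ∈ Γ, ‖ξ - η‖ ≤ c * ‖ξ‖} ⊆ Γ')
    (hs : 0 ≤ s) (hm : 0 ≤ m) {g : EuclideanSpace ℝ (Fin d) → ℂ} (hg : Measurable g)
    (hgb : ∀ ξ, ‖g ξ‖ ≤ C₁ * (1 + ‖ξ‖ ^ 2) ^ (m / 2))
    {h : EuclideanSpace ℝ (Fin d) → ℂ} (hh : Measurable h) :
    sqIntCone s Γ (fun ξ => ∫ η, h η * g (ξ - η)) ≤
      (2 * ENNReal.ofReal (2 ^ s) * sqIntCone s Γ' g +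
        2 * ENNReal.ofReal (C₁ * ((1 + c⁻¹) ^ m * c⁻¹ ^ (s + d + 1))) ^ 2 *
          ∫⁻ ξ : EuclideanSpace ℝ (Fin d), bracketWeight (-(d + 1 : ℝ)) ξ) *
        (∫⁻ η, bracketWeight ((s + m + d + 1) / 2) η * ‖h η‖ₑ) ^ 2 := by
  set e : ℝ := (s + d + 1) / 2
  set S := toMeasurable volume Γ'
  set A := (fun η => ‖h η‖ₑ) ⋆ₗ S.indicator fun ζ => ‖g ζ‖ₑ
  have hA : Measurable A :=
    measurable_lconvolution _ (by fun_prop) (hg.enorm.indicator (measurableSet_toMeasurable _ _))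
  set C₂ := ENNReal.ofReal (C₁ * ((1 + c⁻¹) ^ m * c⁻¹ ^ (s + d + 1)))
  set I := ∫⁻ η, bracketWeight ((s + m + d + 1) / 2) η * ‖h η‖ₑ
  have hI : (s + m + d + 1) / 2 = e + m / 2 := by ring
  have hpt : ∀ ξ ∈ Γ, bracketWeight s ξ * ‖∫ η, h η * g (ξ - η)‖ₑ ^ 2 ≤
      2 * (bracketWeight s ξ * A ξ ^ 2) + 2 * C₂ ^ 2 * I ^ 2 * bracketWeight (-(d + 1 : ℝ)) ξ := by
    intro ξ hξ
    have hnear : ∀ η, ‖η‖ ≤ c * ‖ξ‖ → ξ - η ∈ S := fun η hη =>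
      subset_toMeasurable _ _ (hsub ⟨ξ, hξ, by rwa [sub_sub_cancel]⟩)
    have hsplit := enorm_integral_mul_sub_le (μ := volume) (e := e) hh hc0 hc1 hm (by positivity)
      hgb hnear
    rw [← hI, show 2 * e = s + d + 1 by ring] at hsplit
    have hweight : bracketWeight s ξ * bracketWeight (-e) ξ ^ 2 = bracketWeight (-(d + 1 : ℝ)) ξ := by
      rw [sq, ← bracketWeight_add, ← bracketWeight_add]; congr 1; ring
    calc bracketWeight s ξ * ‖∫ η, h η * g (ξ - η)‖ₑ ^ 2
        ≤ bracketWeight s ξ * (2 * (A ξ ^ 2 + (C₂ * bracketWeight (-e) ξ * I) ^ 2)) := by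
          gcongr; exact (pow_le_pow_left' hsplit 2).trans (ENNReal.add_sq_le_two_mul _ _)
      _ = _ := by rw [← hweight]; ring
  have hnearInt : ∫⁻ ξ, bracketWeight s ξ * A ξ ^ 2 ≤
      ENNReal.ofReal (2 ^ s) * I ^ 2 * sqIntCone s Γ' g := by
    refine (lintegral_bracketWeight_mul_lconvolution_indicator_sq_le hs hg hh Γ').trans ?_
    gcongr
    exact lintegral_mono fun η => by
      gcongr; exact bracketWeight_mono (by linarith [(d.cast_nonneg : (0 : ℝ) ≤ d)]) η
  calc sqIntCone s Γ (fun ξ => ∫ η, h η * g (ξ - η))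
      = ∫⁻ ξ in Γ, bracketWeight s ξ * ‖∫ η, h η * g (ξ - η)‖ₑ ^ 2 := rfl
    _ ≤ ∫⁻ ξ, (2 * (bracketWeight s ξ * A ξ ^ 2) +
          2 * C₂ ^ 2 * I ^ 2 * bracketWeight (-(d + 1 : ℝ)) ξ) :=
        (setLIntegral_mono (by fun_prop) hpt).trans (setLIntegral_le_lintegral _ _)
    _ = 2 * (∫⁻ ξ, bracketWeight s ξ * A ξ ^ 2) +
          2 * C₂ ^ 2 * I ^ 2 * ∫⁻ ξ : EuclideanSpace ℝ (Fin d), bracketWeight (-(d + 1 : ℝ)) ξ := by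
        rw [lintegral_add_left (by fun_prop), lintegral_const_mul _ (by fun_prop),
          lintegral_const_mul _ (by fun_prop)]
    _ ≤ 2 * (ENNReal.ofReal (2 ^ s) * I ^ 2 * sqIntCone s Γ' g) +
          2 * C₂ ^ 2 * I ^ 2 * ∫⁻ ξ : EuclideanSpace ℝ (Fin d), bracketWeight (-(d + 1 : ℝ)) ξ := by
        gcongr
    _ = _ := by ring

theorem stmt13_general {d : ℕ} (Γ Γ' : Set (EuclideanSpace ℝ (Fin d)))
    (c : ℝ) (hc0 : 0 < c) (hc1 : c < 1)
    (hsub : {η : EuclideanSpace ℝ (Fin d) | ∃ ξ ∈ Γ, ‖ξ - η‖ ≤ c * ‖ξ‖} ⊆ Γ')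
    (s : ℝ) (hs : 0 ≤ s) (m : ℝ) (hm : 1 ≤ m)
    (g : EuclideanSpace ℝ (Fin d) → ℂ) (hg : Measurable g) (C₁ : ℝ)
    (hgb : ∀ ξ : EuclideanSpace ℝ (Fin d), ‖g ξ‖ ≤ C₁ * (1 + ‖ξ‖ ^ 2) ^ (m / 2))
    (hCg : sqIntCone s Γ' g < ⊤) :
    ∃ C > (0 : ℝ), ∀ h : EuclideanSpace ℝ (Fin d) → ℂ, Measurable h →
      (∫⁻ η, ENNReal.ofReal ((1 + ‖η‖ ^ 2) ^ ((s + m + d + 1) / 2)) * (‖h η‖₊ : ℝ≥0∞)) < ⊤ →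
      l2Cone s Γ (fun ξ => ∫ η, h η * g (ξ - η)) ≤
        ENNReal.ofReal C *
          ∫⁻ η, ENNReal.ofReal ((1 + ‖η‖ ^ 2) ^ ((s + m + d + 1) / 2)) * (‖h η‖₊ : ℝ≥0∞) := by
  have hJ : ∫⁻ ξ : EuclideanSpace ℝ (Fin d), bracketWeight (-(d + 1 : ℝ)) ξ < ⊤ :=
    lintegral_bracketWeight_lt_top volume (by rw [finrank_euclideanSpace_fin]; linarith)
  set B := 2 * ENNReal.ofReal (2 ^ s) * sqIntCone s Γ' g +
    2 * ENNReal.ofReal (C₁ * ((1 + c⁻¹) ^ m * c⁻¹ ^ (s + d + 1))) ^ 2 *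
      ∫⁻ ξ : EuclideanSpace ℝ (Fin d), bracketWeight (-(d + 1 : ℝ)) ξ
  have hB : B ≠ ⊤ := by finiteness
  refine ⟨B.toReal ^ (1 / 2 : ℝ) + 1, by positivity, fun h hh _ => ?_⟩
  calc l2Cone s Γ (fun ξ => ∫ η, h η * g (ξ - η))
      ≤ (B * (∫⁻ η, bracketWeight ((s + m + d + 1) / 2) η * ‖h η‖ₑ) ^ 2) ^ (1 / 2 : ℝ) :=
        ENNReal.rpow_le_rpow
          (sqIntCone_convolution_le hc0 hc1.le hsub hs (by linarith) hg hgb hh) (by norm_num)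
    _ = ENNReal.ofReal (B.toReal ^ (1 / 2 : ℝ)) *
          ∫⁻ η, bracketWeight ((s + m + d + 1) / 2) η * ‖h η‖ₑ := by
        rw [ENNReal.mul_rpow_of_nonneg _ _ (by norm_num), ← ENNReal.rpow_natCast,
          ← ENNReal.rpow_mul, ← ENNReal.ofReal_rpow_of_nonneg ENNReal.toReal_nonneg (by norm_num),
          ENNReal.ofReal_toReal hB]
        norm_num
    _ ≤ ENNReal.ofReal (B.toReal ^ (1 / 2 : ℝ) + 1) *
          ∫⁻ η, bracketWeight ((s + m + d + 1) / 2) η * ‖h η‖ₑ := by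
        gcongr; linarith

/-- Weighted `L²` convolution estimate on cones from the proof of Theorem 1.2, (i) ⇒ (ii). -/
theorem stmt13 {d : ℕ} (Γ Γ' : Set (EuclideanSpace ℝ (Fin d))) (hΓ : IsCone Γ) (hΓ' : IsCone Γ')
    (c : ℝ) (hc0 : 0 < c) (hc1 : c < 1)
    (hsub : {η : EuclideanSpace ℝ (Fin d) | ∃ ξ ∈ Γ, ‖ξ - η‖ ≤ c * ‖ξ‖} ⊆ Γ')
    (s : ℝ) (hs : 0 ≤ s) (m : ℝ) (hm : 1 ≤ m)
    (g : EuclideanSpace ℝ (Fin d) → ℂ) (hg : Measurable g) (C₁ : ℝ) (hC₁ : 1 ≤ C₁)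
    (hgb : ∀ ξ : EuclideanSpace ℝ (Fin d), ‖g ξ‖ ≤ C₁ * (1 + ‖ξ‖ ^ 2) ^ (m / 2))
    (hCg : sqIntCone s Γ' g < ⊤) :
    ∃ C > (0 : ℝ), ∀ h : EuclideanSpace ℝ (Fin d) → ℂ, Measurable h →
      (∫⁻ η, ENNReal.ofReal ((1 + ‖η‖ ^ 2) ^ ((s + m + d + 1) / 2)) * (‖h η‖₊ : ℝ≥0∞)) < ⊤ →
      l2Cone s Γ (fun ξ => ∫ η, h η * g (ξ - η)) ≤
        ENNReal.ofReal C *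
          ∫⁻ η, ENNReal.ofReal ((1 + ‖η‖ ^ 2) ^ ((s + m + d + 1) / 2)) * (‖h η‖₊ : ℝ≥0∞) :=
  stmt13_general Γ Γ' c hc0 hc1 hsub s hs m hm g hg C₁ hgb hCg
end
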